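/- arXiv:2407.10702 — 4 statements merged into one kernel-verified Lean document; each statement's English description precedes it below -/
import Mathlib

section
/- Let G ∈ ℝ^{K×N}, W ∈ ℝ^{K×d}, H ∈ ℝ^{d×N} be real matrices and λ_W, λ_H > 0. If G Hᵀ + λ_W W = 0 and Wᵀ G + λ_H H = 0, then λ_W Wᵀ W = λ_H H Hᵀ. -/
open Matrix

theorem stmt_0 (K N d : ℕ) (G : Matrix (Fin K) (Fin N) ℝ)
    (W : Matrix (Fin K) (Fin d) ℝ) (H : Matrix (Fin d) (Fin N) ℝ)
    (lW lH : ℝ) (hlW : 0 < lW) (hlH : 0 < lH)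
    (h1 : G * Hᵀ + lW • W = 0) (h2 : Wᵀ * G + lH • H = 0) :
    lW • (Wᵀ * W) = lH • (H * Hᵀ) := by
  have e1 : G * Hᵀ = -(lW • W) := by linear_combination (norm := abel) h1
  have e2 : Wᵀ * G = -(lH • H) := by linear_combination (norm := abel) h2
  have key : Wᵀ * (G * Hᵀ) = (Wᵀ * G) * Hᵀ := (Matrix.mul_assoc _ _ _).symm
  rw [e1, e2] at key
  simpa [Matrix.mul_smul, Matrix.smul_mul, neg_inj] using key
end

section
/- Let G ∈ ℝ^{K×N}, W ∈ ℝ^{K×d}, H ∈ ℝ^{d×N} and λ_W, λ_H > 0. If G Hᵀ + λ_W W = 0 and Wᵀ G + λ_H H = 0, then rank(W) = rank(H) and rank(W) ≤ rank(G). -/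
open Matrix

lemma rank_smul_le {m n : ℕ} (c : ℝ) (A : Matrix (Fin m) (Fin n) ℝ) :
    (c • A).rank ≤ A.rank := by
  have h : c • A = (c • (1 : Matrix (Fin m) (Fin m) ℝ)) * A := by
    rw [Matrix.smul_mul, Matrix.one_mul]
  rw [h]
  exact rank_mul_le_right _ _

lemma rank_neg' {m n : ℕ} (A : Matrix (Fin m) (Fin n) ℝ) : (-A).rank = A.rank := by
  refine le_antisymm ?_ ?_
  · rw [← neg_one_smul ℝ A]; exact rank_smul_le _ _
  · have := rank_smul_le (-1 : ℝ) (-A); simpa using this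

lemma rank_smul_eq {m n : ℕ} {c : ℝ} (hc : c ≠ 0) (A : Matrix (Fin m) (Fin n) ℝ) :
    (c • A).rank = A.rank := by
  refine le_antisymm (rank_smul_le c A) ?_
  have := rank_smul_le c⁻¹ (c • A)
  rwa [smul_smul, inv_mul_cancel₀ hc, one_smul] at this

theorem stmt_1 (K N d : ℕ) (G : Matrix (Fin K) (Fin N) ℝ)
    (W : Matrix (Fin K) (Fin d) ℝ) (H : Matrix (Fin d) (Fin N) ℝ)
    (lW lH : ℝ) (hlW : 0 < lW) (hlH : 0 < lH)
    (h1 : G * Hᵀ + lW • W = 0) (h2 : Wᵀ * G + lH • H = 0) :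
    W.rank = H.rank ∧ W.rank ≤ G.rank := by
  have hW : lW • W = -(G * Hᵀ) := by linear_combination (norm := module) h1
  have hH : lH • H = -(Wᵀ * G) := by linear_combination (norm := module) h2
  have hWr : W.rank = (G * Hᵀ).rank := by
    rw [← rank_smul_eq hlW.ne' W, hW, rank_neg' _]
  have hHr : H.rank = (Wᵀ * G).rank := by
    rw [← rank_smul_eq hlH.ne' H, hH, rank_neg' _]
  constructor
  · apply le_antisymm
    · calc W.rank = (G * Hᵀ).rank := hWr
        _ ≤ Hᵀ.rank := rank_mul_le_right _ _
        _ = H.rank := rank_transpose _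
    · calc H.rank = (Wᵀ * G).rank := hHr
        _ ≤ Wᵀ.rank := rank_mul_le_left _ _
        _ = W.rank := rank_transpose _
  · calc W.rank = (G * Hᵀ).rank := hWr
      _ ≤ G.rank := rank_mul_le_left _ _
end

section
/- Let W ∈ ℝ^{K×d}, H ∈ ℝ^{d×N}, Y ∈ ℝ^{K×N}, and λ_W, λ_H, N' > 0. If W H Hᵀ + N' λ_W W = Y Hᵀ and Wᵀ W H + N' λ_H H = Wᵀ Y, then rank(W) = rank(H) and rank(W) ≤ rank(Y). -/
/-!
Both equations say that a matrix is multiplied by an invertible regularized Gram matrix: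
`W (H Hᵀ + c I) = Y Hᵀ` and `(Wᵀ W + c' I) H = Wᵀ Y`, where `H Hᵀ + c I` and `Wᵀ W + c' I` are
positive definite for `c, c' > 0`. Hence `rank W = rank (Y Hᵀ) ≤ min (rank Y) (rank H)` and
`rank H = rank (Wᵀ Y) ≤ rank W`.
-/

open Matrix

variable {m n k : Type*} [Fintype m] [Fintype n] [DecidableEq m]

theorem Matrix.isUnit_det_mul_transpose_add_smul_one (A : Matrix m n ℝ) {c : ℝ} (hc : 0 < c) :
    IsUnit (A * Aᵀ + c • (1 : Matrix m m ℝ)).det :=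
  (PosDef.posSemidef_add (posSemidef_self_mul_conjTranspose A) (PosDef.one.smul hc)).det_pos
    |>.ne'.isUnit

theorem Matrix.rank_eq_rank_mul_transpose_of_mul_add_smul_one_eq {W : Matrix k m ℝ}
    {H : Matrix m n ℝ} {Y : Matrix k n ℝ} {c : ℝ} (hc : 0 < c)
    (h : W * (H * Hᵀ + c • 1) = Y * Hᵀ) :
    W.rank = (Y * Hᵀ).rank := by
  rw [← h, rank_mul_eq_left_of_isUnit_det _ _ (H.isUnit_det_mul_transpose_add_smul_one hc)]

theorem stmt_8 (K N d : ℕ) (W : Matrix (Fin K) (Fin d) ℝ)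
    (H : Matrix (Fin d) (Fin N) ℝ) (Y : Matrix (Fin K) (Fin N) ℝ)
    (lW lH N' : ℝ) (hlW : 0 < lW) (hlH : 0 < lH) (hN' : 0 < N')
    (h1 : W * (H * Hᵀ) + (N' * lW) • W = Y * Hᵀ)
    (h2 : Wᵀ * W * H + (N' * lH) • H = Wᵀ * Y) :
    W.rank = H.rank ∧ W.rank ≤ Y.rank := by
  have hW : W.rank = (Y * Hᵀ).rank :=
    rank_eq_rank_mul_transpose_of_mul_add_smul_one_eq (mul_pos hN' hlW)
      (by rw [Matrix.mul_add, Matrix.mul_smul, Matrix.mul_one, h1])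
  -- the transpose of `h2` is `h1`'s shape for `(Hᵀ, Wᵀ, Yᵀ)`
  have hH : Hᵀ.rank = (Yᵀ * W).rank := by
    refine rank_eq_rank_mul_transpose_of_mul_add_smul_one_eq (H := Wᵀ) (mul_pos hN' hlH) ?_
    simpa only [transpose_add, transpose_mul, transpose_smul, transpose_transpose, Matrix.mul_add,
      Matrix.mul_smul, Matrix.mul_one] using congrArg transpose h2
  rw [rank_transpose] at hH
  refine ⟨le_antisymm ?_ ?_, hW ▸ rank_mul_le_left _ _⟩
  · exact hW ▸ (rank_mul_le_right _ _).trans_eq (rank_transpose H)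
  · exact hH ▸ rank_mul_le_right _ _
end

section
/- Let G ∈ ℝ^{K×N} be a nonzero matrix with spectral norm ‖G‖, let u ∈ ℝ^K and v ∈ ℝ^N be unit vectors with uᵀ G v = ‖G‖, and let λ_W, λ_H > 0, a ∈ ℝ^d a unit vector. Define Δ_W = (λ_H/λ_W)^{1/4} u aᵀ ∈ ℝ^{K×d} and Δ_H = −(λ_H/λ_W)^{−1/4} a vᵀ ∈ ℝ^{d×N}. Then 2·trace(Gᵀ Δ_W Δ_H) + λ_W ‖Δ_W‖_F² + λ_H ‖Δ_H‖_F² = −2(‖G‖ − √(λ_W λ_H)). In particular, this quantity is strictly negative whenever ‖G‖ > √(λ_W λ_H). -/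
open Matrix

open scoped Matrix.Norms.L2Operator

/-! Since `a` is a unit vector and the two scale factors `(λ_H/λ_W)^(±1/4)` are reciprocal,
`Δ_W Δ_H = -u vᵀ`, so the cross term is `-2 uᵀ G v = -2‖G‖`. The squared Frobenius norms are
the squared scale factors, and the quarter powers are chosen so that both regularization terms equal
`√(λ_W λ_H)`. -/

namespace Matrix

variable {m n α : Type*} [Fintype m] [Fintype n] [CommSemiring α]

theorem trace_transpose_mul_vecMulVec (M : Matrix m n α) (x : m → α) (y : n → α) :
    trace (Mᵀ * vecMulVec x y) = x ⬝ᵥ M *ᵥ y := by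
  rw [mul_vecMulVec, trace_vecMulVec, mulVec_transpose, dotProduct_mulVec]

theorem trace_transpose_vecMulVec_mul_vecMulVec (x : m → α) (y : n → α) :
    trace ((vecMulVec x y)ᵀ * vecMulVec x y) = (x ⬝ᵥ x) * (y ⬝ᵥ y) := by
  rw [trace_transpose_mul_vecMulVec, vecMulVec_mulVec, op_smul_eq_smul, dotProduct_smul,
    smul_eq_mul, mul_comm]

theorem trace_transpose_smul_vecMulVec_mul_self (c : α) (x : m → α) (y : n → α) :
    trace ((c • vecMulVec x y)ᵀ * (c • vecMulVec x y)) =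
      c ^ 2 * ((x ⬝ᵥ x) * (y ⬝ᵥ y)) := by
  rw [transpose_smul, smul_mul, Matrix.mul_smul, smul_smul, trace_smul,
    trace_transpose_vecMulVec_mul_vecMulVec, smul_eq_mul, sq]

end Matrix

namespace Real

theorem mul_sq_rpow_quarter_div {x y : ℝ} (hx : 0 < x) (hy : 0 ≤ y) :
    x * ((y / x) ^ ((1 : ℝ) / 4)) ^ 2 = √(x * y) := by
  have h : (1 : ℝ) / 4 * (2 : ℕ) = 1 / 2 := by norm_num
  rw [← rpow_natCast, ← rpow_mul (div_nonneg hy hx.le), h, ← sqrt_eq_rpow,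
    show x * y = x ^ 2 * (y / x) by field_simp, sqrt_mul' _ (div_nonneg hy hx.le), sqrt_sq hx.le]

theorem div_rpow_neg {x y : ℝ} (hx : 0 ≤ x) (hy : 0 ≤ y) (r : ℝ) :
    (x / y) ^ (-r) = (y / x) ^ r := by
  rw [rpow_neg (div_nonneg hx hy), ← inv_rpow (div_nonneg hx hy), inv_div]

end Real

theorem stmt_13_general (K N d : ℕ) (G : Matrix (Fin K) (Fin N) ℝ)
    (u : Fin K → ℝ) (v : Fin N → ℝ) (a : Fin d → ℝ)
    (hu : ∑ i, u i ^ 2 = 1) (hv : ∑ j, v j ^ 2 = 1) (ha : ∑ i, a i ^ 2 = 1)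
    (huv : u ⬝ᵥ G.mulVec v = ‖G‖)
    (lW lH : ℝ) (hlW : 0 < lW) (hlH : 0 < lH)
    (ΔW : Matrix (Fin K) (Fin d) ℝ) (ΔH : Matrix (Fin d) (Fin N) ℝ)
    (hΔW : ΔW = ((lH / lW) ^ ((1 : ℝ) / 4)) • Matrix.vecMulVec u a)
    (hΔH : ΔH = -(((lH / lW) ^ (-(1 : ℝ) / 4)) • Matrix.vecMulVec a v)) :
    2 * (Gᵀ * (ΔW * ΔH)).trace + lW * (ΔWᵀ * ΔW).trace + lH * (ΔHᵀ * ΔH).trace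
      = -2 * (‖G‖ - Real.sqrt (lW * lH)) ∧
    (Real.sqrt (lW * lH) < ‖G‖ →
      2 * (Gᵀ * (ΔW * ΔH)).trace + lW * (ΔWᵀ * ΔW).trace + lH * (ΔHᵀ * ΔH).trace < 0) := by
  rw [neg_div, Real.div_rpow_neg hlH.le hlW.le] at hΔH
  have hscale : (lH / lW) ^ ((1 : ℝ) / 4) * (lW / lH) ^ ((1 : ℝ) / 4) = 1 := by
    rw [← Real.mul_rpow (by positivity) (by positivity), div_mul_div_cancel₀ hlW.ne',
      div_self hlH.ne', Real.one_rpow]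
  have hu' : u ⬝ᵥ u = 1 := by simpa only [dotProduct, sq] using hu
  have hv' : v ⬝ᵥ v = 1 := by simpa only [dotProduct, sq] using hv
  have ha' : a ⬝ᵥ a = 1 := by simpa only [dotProduct, sq] using ha
  have hprod : ΔW * ΔH = -vecMulVec u v := by
    rw [hΔW, hΔH, Matrix.mul_neg, smul_mul, Matrix.mul_smul, vecMulVec_mul_vecMulVec, ha',
      one_smul, smul_smul, hscale, one_smul]
  have hcross : (Gᵀ * (ΔW * ΔH)).trace = -‖G‖ := by
    rw [hprod, Matrix.mul_neg, trace_neg, trace_transpose_mul_vecMulVec, huv]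
  have hW : lW * (ΔWᵀ * ΔW).trace = √(lW * lH) := by
    rw [hΔW, trace_transpose_smul_vecMulVec_mul_self, hu', ha', mul_one, mul_one,
      Real.mul_sq_rpow_quarter_div hlW hlH.le]
  have hH : lH * (ΔHᵀ * ΔH).trace = √(lW * lH) := by
    rw [hΔH, transpose_neg, Matrix.neg_mul, Matrix.mul_neg, neg_neg,
      trace_transpose_smul_vecMulVec_mul_self, ha', hv', mul_one, mul_one,
      Real.mul_sq_rpow_quarter_div hlH hlW.le, mul_comm]
  have hvalue : 2 * (Gᵀ * (ΔW * ΔH)).trace + lW * (ΔWᵀ * ΔW).trace + lH * (ΔHᵀ * ΔH).trace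
      = -2 * (‖G‖ - √(lW * lH)) := by
    rw [hcross, hW, hH]; ring
  exact ⟨hvalue, fun hgap => by rw [hvalue]; linarith⟩

theorem stmt_13 (K N d : ℕ) (G : Matrix (Fin K) (Fin N) ℝ) (hG : G ≠ 0)
    (u : Fin K → ℝ) (v : Fin N → ℝ) (a : Fin d → ℝ)
    (hu : ∑ i, u i ^ 2 = 1) (hv : ∑ j, v j ^ 2 = 1) (ha : ∑ i, a i ^ 2 = 1)
    (huv : u ⬝ᵥ G.mulVec v = ‖G‖)
    (lW lH : ℝ) (hlW : 0 < lW) (hlH : 0 < lH)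
    (ΔW : Matrix (Fin K) (Fin d) ℝ) (ΔH : Matrix (Fin d) (Fin N) ℝ)
    (hΔW : ΔW = ((lH / lW) ^ ((1 : ℝ) / 4)) • Matrix.vecMulVec u a)
    (hΔH : ΔH = -(((lH / lW) ^ (-(1 : ℝ) / 4)) • Matrix.vecMulVec a v)) :
    2 * (Gᵀ * (ΔW * ΔH)).trace + lW * (ΔWᵀ * ΔW).trace + lH * (ΔHᵀ * ΔH).trace
      = -2 * (‖G‖ - Real.sqrt (lW * lH)) ∧
    (Real.sqrt (lW * lH) < ‖G‖ →
      2 * (Gᵀ * (ΔW * ΔH)).trace + lW * (ΔWᵀ * ΔW).trace + lH * (ΔHᵀ * ΔH).trace < 0) :=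
  stmt_13_general K N d G u v a hu hv ha huv lW lH hlW hlH ΔW ΔH hΔW hΔH
end
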